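/- arXiv:1407.3807 — 5 statements merged into one kernel-verified Lean document; each statement's English description precedes it below -/
import Mathlib

section
/- Let (a_k)_{k∈ℕ} be a sequence of nonnegative real numbers with a_0 > 0 satisfying a_k > (k+1) a_{k+1} for all k ∈ ℕ, and let G(t) = Σ_{k=0}^∞ a_k t^{k+1}/(k+1). Then the function x ↦ x · G(ln(1/x)) = Σ_{k=0}^∞ (a_k/(k+1)) · x · (ln(1/x))^{k+1} is strictly concave on the interval (0,1). -/
/-!
Write `t = log (1 / x)`, `u n = n! a n` and `e k x = x t^(k+1) / (k+1)!`, so that the function is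
`∑ u k e k x`. The decay condition says that `u` strictly decreases, to a limit `L ≥ 0`, and
`∑ e k x = x (exp t - 1) = 1 - x`, so Abel summation turns the function into
`∑ (u j - u (j+1)) (e 0 x + ⋯ + e j x) + L (1 - x)`. Each partial sum `e 0 + ⋯ + e j` is strictly
concave on `(0, 1)`, since its derivative telescopes to `t^(j+1) / (j+1)! - 1`, which decreases
in `x`; a convergent positive combination of them plus an affine function is strictly concave.
-/

open Real Finset Filter Topology
open scoped Nat

theorem StrictConcaveOn.const_mul {E : Type*} [AddCommMonoid E] [Module ℝ E] {s : Set E}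
    {f : E → ℝ} {c : ℝ} (hc : 0 < c) (hf : StrictConcaveOn ℝ s f) :
    StrictConcaveOn ℝ s fun x => c * f x := by
  refine ⟨hf.1, fun x hx y hy hxy p q hp hq hpq => ?_⟩
  have h := mul_lt_mul_of_pos_left (hf.2 hx hy hxy hp hq hpq) hc
  simp only [smul_eq_mul] at h ⊢
  linarith

theorem strictConcaveOn_tsum {ι E : Type*} [AddCommMonoid E] [Module ℝ E] {s : Set E}
    {f : ι → E → ℝ} (hf : ∀ i, ConcaveOn ℝ s (f i)) {i₀ : ι}
    (hi₀ : StrictConcaveOn ℝ s (f i₀)) (hsum : ∀ x ∈ s, Summable fun i => f i x) :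
    StrictConcaveOn ℝ s fun x => ∑' i, f i x := by
  refine ⟨hi₀.1, fun x hx y hy hxy p q hp hq hpq => ?_⟩
  have hz := hi₀.1 hx hy hp.le hq.le hpq
  calc p • ∑' i, f i x + q • ∑' i, f i y = ∑' i, (p • f i x + q • f i y) := by
        simp only [smul_eq_mul]
        rw [((hsum x hx).mul_left p).tsum_add ((hsum y hy).mul_left q), tsum_mul_left,
          tsum_mul_left]
    _ < ∑' i, f i (p • x + q • y) :=
        Summable.tsum_lt_tsum (fun i => (hf i).2 hx hy hp.le hq.le hpq)
          (hi₀.2 hx hy hxy hp hq hpq) (((hsum x hx).const_smul p).add ((hsum y hy).const_smul q))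
          (hsum _ hz)

theorem sum_range_sub_succ_mul_sum_range (u e : ℕ → ℝ) (n : ℕ) :
    ∑ j ∈ range n, (u j - u (j + 1)) * ∑ k ∈ range (j + 1), e k
      = ∑ k ∈ range n, u k * e k - u n * ∑ k ∈ range n, e k := by
  induction n with
  | zero => simp
  | succ n ih => rw [sum_range_succ, ih, sum_range_succ, sum_range_succ]; ring

theorem hasSum_sub_succ_mul_sum_range {u e : ℕ → ℝ} {U E L : ℝ} (hu : Antitone u)
    (hL : Tendsto u atTop (𝓝 L)) (he : ∀ k, 0 ≤ e k) (hue : HasSum (fun k => u k * e k) U)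
    (hE : HasSum e E) :
    HasSum (fun j => (u j - u (j + 1)) * ∑ k ∈ range (j + 1), e k) (U - L * E) := by
  refine (hasSum_iff_tendsto_nat_of_nonneg (fun j => mul_nonneg (sub_nonneg.2 (hu j.le_succ))
    (sum_nonneg fun k _ => he k)) _).2 ?_
  simp only [sum_range_sub_succ_mul_sum_range]
  exact hue.tendsto_sum_nat.sub (hL.mul hE.tendsto_sum_nat)

noncomputable def logPowTerm (k : ℕ) (x : ℝ) : ℝ := x * log (1 / x) ^ (k + 1) / (k + 1)!

theorem hasDerivAt_logPowTerm (k : ℕ) {x : ℝ} (hx : 0 < x) :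
    HasDerivAt (logPowTerm k)
      (log (1 / x) ^ (k + 1) / (k + 1)! - log (1 / x) ^ k / k !) x := by
  have hlog : HasDerivAt (fun y => log (1 / y)) (-x⁻¹) x := by
    have h : (fun y : ℝ => log (1 / y)) = fun y => -log y :=
      funext fun y => by rw [one_div, log_inv]
    exact h ▸ (hasDerivAt_log hx.ne').neg
  refine (((hasDerivAt_id x).mul (hlog.pow (k + 1))).div_const ((k + 1)! : ℝ)).congr_deriv ?_
  simp only [Pi.pow_apply, id_eq, Nat.add_sub_cancel, Nat.factorial_succ]
  push_cast
  field_simp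
  ring

theorem hasDerivAt_sum_logPowTerm (j : ℕ) {x : ℝ} (hx : 0 < x) :
    HasDerivAt (fun y => ∑ k ∈ range (j + 1), logPowTerm k y)
      (log (1 / x) ^ (j + 1) / (j + 1)! - 1) x := by
  refine (HasDerivAt.fun_sum fun k (_ : k ∈ range (j + 1)) =>
    hasDerivAt_logPowTerm k hx).congr_deriv ?_
  rw [sum_range_sub (fun k => log (1 / x) ^ k / k !)]
  simp

theorem strictConcaveOn_sum_logPowTerm (j : ℕ) :
    StrictConcaveOn ℝ (Set.Ioo 0 1) fun x => ∑ k ∈ range (j + 1), logPowTerm k x := by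
  refine StrictAntiOn.strictConcaveOn_of_deriv (convex_Ioo 0 1)
    (fun x hx => (hasDerivAt_sum_logPowTerm j hx.1).continuousAt.continuousWithinAt) ?_
  rw [interior_Ioo]
  intro x hx y hy hxy
  rw [(hasDerivAt_sum_logPowTerm j hx.1).deriv, (hasDerivAt_sum_logPowTerm j hy.1).deriv]
  have hy0 : 0 ≤ log (1 / y) := log_nonneg (by rw [le_div_iff₀ hy.1]; linarith [hy.2])
  have hyx : log (1 / y) < log (1 / x) :=
    log_lt_log (one_div_pos.2 hy.1) (one_div_lt_one_div_of_lt hx.1 hxy)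
  gcongr

theorem hasSum_logPowTerm {x : ℝ} (hx : 0 < x) : HasSum (fun k => logPowTerm k x) (1 - x) := by
  have hexp := NormedSpace.expSeries_div_hasSum_exp (log (1 / x))
  rw [← Real.exp_eq_exp_ℝ, exp_log (one_div_pos.2 hx), ← hasSum_nat_add_iff' 1] at hexp
  have h := hexp.mul_left x
  simp only [sum_range_one, pow_zero, Nat.factorial_zero, Nat.cast_one, div_one, mul_sub,
    mul_one_div_cancel hx.ne', mul_one, ← mul_div_assoc] at h
  exact h

theorem logPowTerm_nonneg (k : ℕ) {x : ℝ} (hx : x ∈ Set.Ioo 0 1) : 0 ≤ logPowTerm k x := by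
  have hlog : 0 ≤ log (1 / x) := log_nonneg (by rw [le_div_iff₀ hx.1]; linarith [hx.2])
  exact div_nonneg (mul_nonneg hx.1.le (pow_nonneg hlog _)) (by positivity)

section

variable {a : ℕ → ℝ}

theorem factorial_succ_mul_lt (ha_dec : ∀ k, ((k + 1 : ℕ) : ℝ) * a (k + 1) < a k) (n : ℕ) :
    ((n + 1)! : ℝ) * a (n + 1) < n ! * a n := by
  have h := mul_lt_mul_of_pos_left (ha_dec n) (by positivity : (0 : ℝ) < n !)
  rw [Nat.factorial_succ]
  push_cast at h ⊢
  linarith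

theorem hasSum_mul_sum_logPowTerm (ha_nonneg : ∀ k, 0 ≤ a k)
    (ha_dec : ∀ k, ((k + 1 : ℕ) : ℝ) * a (k + 1) < a k) {x : ℝ} (hx : x ∈ Set.Ioo 0 1) :
    HasSum (fun j => ((j ! : ℝ) * a j - ((j + 1)! : ℝ) * a (j + 1)) *
        ∑ k ∈ range (j + 1), logPowTerm k x)
      (x * ∑' k : ℕ, a k * log (1 / x) ^ (k + 1) / ((k : ℝ) + 1)
        - (⨅ n, (n ! : ℝ) * a n) * (1 - x)) := by
  set u := fun n => (n ! : ℝ) * a n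
  have hu : Antitone u := antitone_nat_of_succ_le fun n => (factorial_succ_mul_lt ha_dec n).le
  have hu0 : ∀ n, 0 ≤ u n := fun n => mul_nonneg (by positivity) (ha_nonneg n)
  have hL : Tendsto u atTop (𝓝 (⨅ n, u n)) :=
    tendsto_atTop_ciInf hu ⟨0, by rintro _ ⟨n, rfl⟩; exact hu0 n⟩
  have he := hasSum_logPowTerm hx.1
  have hue : Summable fun k => u k * logPowTerm k x :=
    .of_nonneg_of_le (fun k => mul_nonneg (hu0 k) (logPowTerm_nonneg k hx))
      (fun k => mul_le_mul_of_nonneg_right (hu k.zero_le) (logPowTerm_nonneg k hx))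
      (he.summable.mul_left (u 0))
  convert hasSum_sub_succ_mul_sum_range hu hL (logPowTerm_nonneg · hx) hue.hasSum he using 2
  rw [← tsum_mul_left]
  congr 1
  funext k
  simp only [u, logPowTerm, Nat.factorial_succ]
  push_cast
  field_simp

end

theorem universal_group_entropy_summand_strictConcave_general (a : ℕ → ℝ)
    (ha_nonneg : ∀ k, 0 ≤ a k)
    (ha_dec : ∀ k, (((k + 1 : ℕ) : ℝ)) * a (k + 1) < a k) :
    StrictConcaveOn ℝ (Set.Ioo (0 : ℝ) 1)
      (fun x : ℝ => x * ∑' k : ℕ, a k * (Real.log (1 / x)) ^ (k + 1) / ((k : ℝ) + 1)) := by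
  have hdecomp := fun x (hx : x ∈ Set.Ioo (0 : ℝ) 1) =>
    hasSum_mul_sum_logPowTerm ha_nonneg ha_dec hx
  have hterm := fun j => (strictConcaveOn_sum_logPowTerm j).const_mul
    (sub_pos.2 (factorial_succ_mul_lt ha_dec j))
  have hseries := strictConcaveOn_tsum (fun j => (hterm j).concaveOn) (hterm 0)
    fun x hx => (hdecomp x hx).summable
  have haffine : ConcaveOn ℝ (Set.Ioo 0 1) fun x => (⨅ n, (n ! : ℝ) * a n) * (1 - x) :=
    ⟨convex_Ioo 0 1, fun x _ y _ p q _ _ hpq => le_of_eq <| by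
      simp only [smul_eq_mul]
      linear_combination (⨅ n, (n ! : ℝ) * a n) * hpq⟩
  refine (hseries.add_concaveOn haffine).congr fun x hx => ?_
  rw [Pi.add_apply, (hdecomp x hx).tsum_eq]
  ring

/-- Under the decay condition `a_k > (k+1) a_{k+1}` (with `a_k ≥ 0`, `a_0 > 0`), the function
`x ↦ x · G(ln(1/x)) = Σ_{k=0}^∞ (a_k/(k+1)) x (ln(1/x))^{k+1}` is strictly concave on `(0,1)`. -/
theorem universal_group_entropy_summand_strictConcave (a : ℕ → ℝ)
    (ha_nonneg : ∀ k, 0 ≤ a k) (ha0 : 0 < a 0)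
    (ha_dec : ∀ k, (((k + 1 : ℕ) : ℝ)) * a (k + 1) < a k) :
    StrictConcaveOn ℝ (Set.Ioo (0 : ℝ) 1)
      (fun x : ℝ => x * ∑' k : ℕ, a k * (Real.log (1 / x)) ^ (k + 1) / ((k : ℝ) + 1)) :=
  universal_group_entropy_summand_strictConcave_general a ha_nonneg ha_dec
end

section
/- Let (a_k)_{k∈ℕ} be a sequence of nonnegative real numbers with a_0 > 0 satisfying a_k > (k+1) a_{k+1} for all k ∈ ℕ, let G(t) = Σ_{k=0}^∞ a_k t^{k+1}/(k+1), and define S_U(p_1,…,p_W) = Σ_{i=1}^W p_i G(ln(1/p_i)) for probability distributions with all p_i > 0. Then for every W ≥ 1 and every such distribution (p_1,…,p_W), one has S_U(p_1,…,p_W) ≤ S_U(1/W,…,1/W) = G(ln W), with equality if and only if the distribution is uniform. -/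
/-!
Put `u = ln (1/x) ≥ 0` for `x ∈ (0, 1]`. Since `a_k ≤ a_0 / k!`, all series involved are entire
and may be differentiated termwise, which gives
`(x G(ln (1/x)))'' = (∑ (k+1) a_{k+1} u^k - ∑ a_k u^k) / x < 0`, because `(k+1) a_{k+1} ≤ a_k`,
strictly for `k = 0`.
So `x ↦ x G(ln (1/x))` is strictly concave on `(0, 1]`, and the theorem is Jensen's inequality for
the uniform weights `1/W`, together with its equality case.
-/

open Real Set
open scoped Nat

section PowerSeries

theorem Summable.of_abs_mul_abs_pow {c : ℕ → ℝ} {t : ℝ}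
    (hc : Summable fun k => |c k| * |t| ^ k) : Summable fun k => c k * t ^ k :=
  .of_norm_bounded hc fun k => by simp

variable {c : ℕ → ℝ}

theorem hasDerivAt_tsum_mul_pow_succ_div (hc : ∀ R, Summable fun k => |c k| * R ^ k) (t : ℝ) :
    HasDerivAt (fun t => ∑' k, c k * t ^ (k + 1) / (k + 1)) (∑' k, c k * t ^ k) t := by
  set R := |t| + 1
  have hR : 0 < R := by positivity
  refine hasDerivAt_tsum_of_isPreconnected (hc R) isOpen_Ioo isPreconnected_Ioo
    (g := fun k y => c k * y ^ (k + 1) / (k + 1)) (g' := fun k y => c k * y ^ k)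
    (fun k y _ => ?_) (fun k y hy => ?_) (t := Ioo (-R) R) (y₀ := 0) ⟨by linarith, hR⟩ ?_
    (abs_lt.mp (lt_add_one _))
  · refine (((hasDerivAt_pow (k + 1) y).const_mul (c k)).div_const ((k : ℝ) + 1)).congr_deriv ?_
    push_cast
    field_simp
  · rw [norm_mul, norm_pow, Real.norm_eq_abs, Real.norm_eq_abs]
    gcongr
    exact (abs_lt.mpr hy).le
  · simp

theorem hasDerivAt_tsum_mul_pow (hc : ∀ R, Summable fun k => |c k| * R ^ k)
    (hc' : ∀ R, Summable fun k => |(k + 1) * c (k + 1)| * R ^ k) (t : ℝ) :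
    HasDerivAt (fun t => ∑' k, c k * t ^ k) (∑' k, (k + 1) * c (k + 1) * t ^ k) t := by
  have hshift : (fun t => ∑' k, c k * t ^ k) =
      fun t => c 0 + ∑' k, (k + 1) * c (k + 1) * t ^ (k + 1) / (k + 1) := by
    funext t
    rw [(hc |t|).of_abs_mul_abs_pow.tsum_eq_zero_add]
    congr 1
    · simp
    · congr 1 with k
      field_simp
  rw [hshift]
  exact (hasDerivAt_tsum_mul_pow_succ_div hc' t).const_add _

end PowerSeries

section Coefficients

variable {a : ℕ → ℝ}

theorem le_div_factorial_of_succ_mul_le (ha : ∀ k, (k + 1) * a (k + 1) ≤ a k) (k : ℕ) :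
    a k ≤ a 0 / k ! := by
  induction k with
  | zero => simp
  | succ n ih =>
    calc a (n + 1) ≤ a n / (n + 1) := by rw [le_div_iff₀ (by positivity), mul_comm]; exact ha n
      _ ≤ a 0 / n ! / (n + 1) := by gcongr
      _ = a 0 / (n + 1)! := by rw [Nat.factorial_succ, div_div]; push_cast; ring

theorem summable_abs_mul_pow_of_succ_mul_le (ha_nonneg : ∀ k, 0 ≤ a k)
    (ha : ∀ k, (k + 1) * a (k + 1) ≤ a k) (R : ℝ) : Summable fun k => |a k| * R ^ k := by
  refine .of_norm_bounded ((Real.summable_pow_div_factorial |R|).mul_left (a 0)) fun k => ?_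
  simp only [norm_mul, norm_pow, Real.norm_eq_abs, abs_of_nonneg (ha_nonneg k)]
  rw [mul_comm, mul_div_left_comm]
  gcongr
  exact le_div_factorial_of_succ_mul_le ha k

theorem summable_abs_succ_mul_mul_pow_of_succ_mul_le (ha_nonneg : ∀ k, 0 ≤ a k)
    (ha : ∀ k, (k + 1) * a (k + 1) ≤ a k) (R : ℝ) :
    Summable fun k => |(k + 1) * a (k + 1)| * R ^ k := by
  refine .of_norm_bounded (summable_abs_mul_pow_of_succ_mul_le ha_nonneg ha |R|) fun k => ?_
  have := ha_nonneg (k + 1)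
  simp only [norm_mul, norm_pow, Real.norm_eq_abs, abs_abs, abs_of_nonneg (ha_nonneg k)]
  rw [abs_of_nonneg (by positivity)]
  exact mul_le_mul_of_nonneg_right (ha k) (by positivity)

theorem tsum_succ_mul_mul_pow_lt_tsum_mul_pow (ha_nonneg : ∀ k, 0 ≤ a k)
    (ha : ∀ k, (k + 1) * a (k + 1) ≤ a k) (h01 : a 1 < a 0) {t : ℝ} (ht : 0 ≤ t) :
    ∑' k, (k + 1) * a (k + 1) * t ^ k < ∑' k, a k * t ^ k :=
  Summable.tsum_lt_tsum (i := 0) (fun k => by gcongr; exact ha k) (by simpa using h01)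
    (summable_abs_succ_mul_mul_pow_of_succ_mul_le ha_nonneg ha |t|).of_abs_mul_abs_pow
    (summable_abs_mul_pow_of_succ_mul_le ha_nonneg ha |t|).of_abs_mul_abs_pow

end Coefficients

noncomputable def groupLog (a : ℕ → ℝ) (t : ℝ) : ℝ := ∑' k, a k * t ^ (k + 1) / (k + 1)

section Concavity

variable {a : ℕ → ℝ}

theorem hasDerivAt_mul_groupLog_neg_log (ha : ∀ R, Summable fun k => |a k| * R ^ k) {x : ℝ}
    (hx : 0 < x) :
    HasDerivAt (fun x => x * groupLog a (-log x))
      (groupLog a (-log x) - ∑' k, a k * (-log x) ^ k) x := by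
  have hG := (hasDerivAt_tsum_mul_pow_succ_div ha (-log x)).comp x (hasDerivAt_log hx.ne').neg
  refine ((hasDerivAt_id x).mul hG).congr_deriv ?_
  field_simp
  simp only [groupLog, Function.comp_apply, Pi.neg_apply, id_eq]
  ring

theorem hasDerivAt_groupLog_neg_log_sub_tsum_mul_pow (ha : ∀ R, Summable fun k => |a k| * R ^ k)
    (ha' : ∀ R, Summable fun k => |(k + 1) * a (k + 1)| * R ^ k) {x : ℝ} (hx : 0 < x) :
    HasDerivAt (fun x => groupLog a (-log x) - ∑' k, a k * (-log x) ^ k)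
      ((∑' k, (k + 1) * a (k + 1) * (-log x) ^ k - ∑' k, a k * (-log x) ^ k) / x) x := by
  have hlog : HasDerivAt (fun x => -log x) (-x⁻¹) x := (hasDerivAt_log hx.ne').neg
  refine (((hasDerivAt_tsum_mul_pow_succ_div ha _).comp x hlog).sub
    ((hasDerivAt_tsum_mul_pow ha ha' _).comp x hlog)).congr_deriv ?_
  field_simp
  ring

theorem strictConcaveOn_mul_groupLog_neg_log (ha_nonneg : ∀ k, 0 ≤ a k)
    (ha : ∀ k, (k + 1) * a (k + 1) ≤ a k) (h01 : a 1 < a 0) :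
    StrictConcaveOn ℝ (Ioc 0 1) fun x => x * groupLog a (-log x) := by
  have hS := summable_abs_mul_pow_of_succ_mul_le ha_nonneg ha
  refine strictConcaveOn_of_deriv2_neg (convex_Ioc 0 1)
    (fun x hx => (hasDerivAt_mul_groupLog_neg_log hS hx.1).continuousAt.continuousWithinAt)
    fun x hx => ?_
  rw [interior_Ioc] at hx
  have hderiv : deriv (fun x => x * groupLog a (-log x)) =ᶠ[nhds x]
      fun x => groupLog a (-log x) - ∑' k, a k * (-log x) ^ k :=
    Filter.eventually_of_mem (Ioi_mem_nhds hx.1) fun y hy =>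
      (hasDerivAt_mul_groupLog_neg_log hS hy).deriv
  rw [Function.iterate_succ_apply, Function.iterate_one, hderiv.deriv_eq,
    (hasDerivAt_groupLog_neg_log_sub_tsum_mul_pow hS
      (summable_abs_succ_mul_mul_pow_of_succ_mul_le ha_nonneg ha) hx.1).deriv]
  refine div_neg_of_neg_of_pos (sub_neg.mpr ?_) hx.1
  exact tsum_succ_mul_mul_pow_lt_tsum_mul_pow ha_nonneg ha h01
    (neg_nonneg.mpr (log_nonpos hx.1.le hx.2.le))

end Concavity

section Jensen

variable {ι : Type*} [Fintype ι] [Nonempty ι] {s : Set ℝ} {f : ℝ → ℝ} {p : ι → ℝ}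

theorem ConcaveOn.sum_le_card_mul_map_mean (hf : ConcaveOn ℝ s f) (hp : ∀ i, p i ∈ s) :
    ∑ i, f (p i) ≤ Fintype.card ι * f ((∑ i, p i) / Fintype.card ι) := by
  have := hf.le_map_sum (t := Finset.univ) (w := fun _ => (Fintype.card ι : ℝ)⁻¹)
    (fun _ _ => by positivity) (by simp) (fun i _ => hp i)
  simp only [smul_eq_mul, ← div_eq_inv_mul, ← Finset.sum_div] at this
  rwa [div_le_iff₀' (by positivity)] at this

theorem StrictConcaveOn.sum_eq_card_mul_map_mean_iff (hf : StrictConcaveOn ℝ s f)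
    (hp : ∀ i, p i ∈ s) :
    ∑ i, f (p i) = Fintype.card ι * f ((∑ i, p i) / Fintype.card ι) ↔
      ∀ i, p i = (∑ i, p i) / Fintype.card ι := by
  have := hf.map_sum_eq_iff (t := Finset.univ) (w := fun _ => (Fintype.card ι : ℝ)⁻¹)
    (fun _ _ => by positivity) (by simp) (fun i _ => hp i)
  simp only [smul_eq_mul, ← div_eq_inv_mul, ← Finset.sum_div, Finset.mem_univ, true_implies]
    at this
  rw [← this, eq_div_iff (by positivity), mul_comm, eq_comm]

end Jensen

theorem universal_group_entropy_max_at_uniform_general (a : ℕ → ℝ)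
    (ha_nonneg : ∀ k, 0 ≤ a k)
    (ha_dec : ∀ k, (((k + 1 : ℕ) : ℝ)) * a (k + 1) < a k)
    (G : ℝ → ℝ) (hG : ∀ t : ℝ, G t = ∑' k : ℕ, a k * t ^ (k + 1) / ((k : ℝ) + 1))
    (W : ℕ) (p : Fin W → ℝ) (hp : ∀ i, 0 < p i)
    (hsum : ∑ i, p i = 1) :
    (∑ i, p i * G (Real.log (1 / p i))) ≤ G (Real.log W) ∧
      ((∑ i, p i * G (Real.log (1 / p i))) = G (Real.log W) ↔
        ∀ i, p i = 1 / (W : ℝ)) := by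
  obtain rfl : G = groupLog a := funext hG
  have hconc := strictConcaveOn_mul_groupLog_neg_log ha_nonneg
    (fun k => by exact_mod_cast (ha_dec k).le) (by simpa using ha_dec 0)
  have hW : W ≠ 0 := by rintro rfl; simp at hsum
  have : NeZero W := ⟨hW⟩
  have hpI : ∀ i, p i ∈ Ioc 0 1 := fun i =>
    ⟨hp i, hsum ▸ Finset.single_le_sum (fun j _ => (hp j).le) (Finset.mem_univ i)⟩
  have huniform : (W : ℝ) * ((W : ℝ)⁻¹ * groupLog a (-log (W : ℝ)⁻¹)) = groupLog a (log W) := by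
    rw [log_inv, neg_neg, ← mul_assoc, mul_inv_cancel₀ (Nat.cast_ne_zero.mpr hW), one_mul]
  simp only [one_div, log_inv]
  have hle := hconc.concaveOn.sum_le_card_mul_map_mean hpI
  have heq := hconc.sum_eq_card_mul_map_mean_iff hpI
  simp only [hsum, Fintype.card_fin, one_div] at hle heq
  rw [huniform] at hle heq
  exact ⟨hle, heq⟩

/-- The universal-group entropy `S_U(p) = Σ_i p_i G(ln(1/p_i))`, with
`G(t) = Σ'_k a_k t^{k+1}/(k+1)` for a sequence satisfying `a_k ≥ 0`, `a_0 > 0`,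
`a_k > (k+1) a_{k+1}`, attains its maximum `G(ln W)` exactly at the uniform distribution. -/
theorem universal_group_entropy_max_at_uniform (a : ℕ → ℝ)
    (ha_nonneg : ∀ k, 0 ≤ a k) (ha0 : 0 < a 0)
    (ha_dec : ∀ k, (((k + 1 : ℕ) : ℝ)) * a (k + 1) < a k)
    (G : ℝ → ℝ) (hG : ∀ t : ℝ, G t = ∑' k : ℕ, a k * t ^ (k + 1) / ((k : ℝ) + 1))
    (W : ℕ) (hW : 1 ≤ W) (p : Fin W → ℝ) (hp : ∀ i, 0 < p i)
    (hsum : ∑ i, p i = 1) :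
    (∑ i, p i * G (Real.log (1 / p i))) ≤ G (Real.log W) ∧
      ((∑ i, p i * G (Real.log (1 / p i))) = G (Real.log W) ↔
        ∀ i, p i = 1 / (W : ℝ)) :=
  universal_group_entropy_max_at_uniform_general a ha_nonneg ha_dec G hG W p hp hsum
end

section
/- Let d ∈ ℕ, let c > 0, and let p ∈ (0,1]. Then e · Γ(1+d, 1 − c·ln p) = p^c · Σ_{k=0}^{d} [ (1/(d+1)) ∏_{j=0}^{k} (d−j+1) ] · Σ_{n=0}^{d−k} C(d−k, n) · (ln(1/p^c))^{n}. Consequently, for every probability distribution (p_1,…,p_W) with positive entries, the Hanel–Thurner entropy satisfies S_{c,d}(p) = (1/(1−c+cd)) Σ_{i=1}^W p_i^c { Σ_{k=0}^{d} (1/(d+1)) ∏_{j=0}^{k}(d−j+1) · Σ_{n=0}^{d−k} C(d−k,n) (ln(1/p_i^c))^{n} } − c/(1−c+cd), provided 1−c+cd ≠ 0. -/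
/-!
For `a ≥ 0`, `Γ(d+1, a) = d! e^{-a} ∑_{n ≤ d} aⁿ/n!`, since `-d! e^{-t} ∑_{n ≤ d} tⁿ/n!` is an
antiderivative of `t^d e^{-t}` vanishing at infinity. Put `L = ln(1/p^c) ≥ 0` and `a = 1 + L`,
so that `e · e^{-a} = p^c`. On the right-hand side the `k`-th coefficient
`∏_{j ≤ k} (d - j + 1) / (d + 1)` is `d!/(d-k)!` and the inner binomial sum is `(L + 1)^{d-k}`;
reindexing `k ↦ d - k` gives `d! ∑_{n ≤ d} aⁿ/n!`. The entropy identity is this termwise,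
as every `pᵢ ≤ 1`.
-/

open MeasureTheory Filter Real Finset Topology
open scoped Nat

lemma hasDerivAt_sum_range_pow_div_factorial (d : ℕ) (t : ℝ) :
    HasDerivAt (fun t : ℝ => ∑ n ∈ range (d + 1), t ^ n / (n !))
      (∑ n ∈ range d, t ^ n / (n !)) t := by
  induction d with
  | zero => simpa using hasDerivAt_const t (1 : ℝ)
  | succ d ih =>
    have hterm : HasDerivAt (fun t : ℝ => t ^ (d + 1) / (d + 1)!) (t ^ d / (d !)) t := by
      refine ((hasDerivAt_pow (d + 1) t).div_const _).congr_deriv ?_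
      rw [Nat.factorial_succ]; push_cast; field_simp
    simp_rw [sum_range_succ _ (d + 1)]
    rw [sum_range_succ _ d]
    exact ih.add hterm

lemma integral_Ioi_pow_mul_exp_neg (d : ℕ) {a : ℝ} (ha : 0 ≤ a) :
    ∫ t in Set.Ioi a, t ^ d * exp (-t) = d ! * exp (-a) * ∑ n ∈ range (d + 1), a ^ n / (n !) := by
  set E : ℝ → ℝ := fun t => ∑ n ∈ range (d + 1), t ^ n / (n !)
  have hderiv : ∀ t, HasDerivAt (fun t => -(d ! * exp (-t) * E t)) (t ^ d * exp (-t)) t := by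
    intro t
    have hexp : HasDerivAt (fun t : ℝ => exp (-t)) (-exp (-t)) t := by
      simpa using (hasDerivAt_neg t).exp
    refine ((hexp.const_mul (d ! : ℝ)).mul
      (hasDerivAt_sum_range_pow_div_factorial d t)).neg.congr_deriv ?_
    rw [sum_range_succ _ d]; field_simp; ring
  have hlim : Tendsto (fun t => -(d ! * exp (-t) * E t)) atTop (𝓝 0) := by
    have : Tendsto (fun t : ℝ => ∑ n ∈ range (d + 1), t ^ n * exp (-t) / (n !)) atTop
        (𝓝 (∑ n ∈ range (d + 1), 0 / (n ! : ℝ))) :=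
      tendsto_finsetSum _ fun n _ => (tendsto_pow_mul_exp_neg_atTop_nhds_zero n).div_const _
    simpa [E, mul_sum, div_eq_mul_inv, mul_assoc, mul_comm, mul_left_comm] using
      (this.const_mul (d ! : ℝ)).neg
  rw [integral_Ioi_of_hasDerivAt_of_nonneg' (fun t _ => hderiv t)
    (fun t ht => by have : 0 < t := ha.trans_lt ht; positivity) hlim]
  simp [E]

lemma sum_range_choose_mul_pow {R : Type*} [CommSemiring R] (m : ℕ) (x : R) :
    ∑ n ∈ range (m + 1), (m.choose n : R) * x ^ n = (x + 1) ^ m := by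
  simp [add_pow, mul_comm]

lemma prod_range_succ_sub_add_one_div (d k : ℕ) (hk : k ≤ d) :
    (∏ j ∈ range (k + 1), ((d : ℝ) - j + 1)) / (d + 1) = d ! / (d - k)! := by
  have hdesc : ∏ j ∈ range k, ((d : ℝ) - j) = d.descFactorial k := by
    rw [Nat.descFactorial_eq_prod_range, Nat.cast_prod]
    exact prod_congr rfl fun j hj => by
      rw [Nat.cast_sub (by simp at hj; omega)]
  have hfac : ((d - k)! : ℝ) * d.descFactorial k = d ! := by
    exact_mod_cast Nat.factorial_mul_descFactorial hk
  rw [prod_range_succ', Nat.cast_zero, sub_zero]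
  simp_rw [Nat.cast_succ, sub_add_eq_sub_sub, sub_add_cancel, hdesc]
  field_simp
  linear_combination hfac

lemma sum_prod_div_mul_sum_choose_mul_pow (d : ℕ) (x : ℝ) :
    ∑ k ∈ range (d + 1), ((∏ j ∈ range (k + 1), ((d : ℝ) - (j : ℝ) + 1)) / ((d : ℝ) + 1)) *
        ∑ n ∈ range (d - k + 1), (Nat.choose (d - k) n : ℝ) * x ^ n =
      d ! * ∑ n ∈ range (d + 1), (x + 1) ^ n / (n !) := by
  rw [mul_sum]
  conv_rhs => rw [← sum_range_reflect]
  refine sum_congr rfl fun k hk => ?_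
  rw [mem_range] at hk
  rw [prod_range_succ_sub_add_one_div d k (by omega), sum_range_choose_mul_pow,
    show d + 1 - 1 - k = d - k by omega]
  ring

lemma exp_one_mul_integral_Ioi_one_sub_mul_log (d : ℕ) {c p : ℝ} (hc : 0 ≤ c) (hp : 0 < p)
    (hp1 : p ≤ 1) :
    exp 1 * ∫ t in Set.Ioi (1 - c * log p), t ^ d * exp (-t) =
      p ^ c * ∑ k ∈ range (d + 1),
        ((∏ j ∈ range (k + 1), ((d : ℝ) - (j : ℝ) + 1)) / ((d : ℝ) + 1)) *
          ∑ n ∈ range (d - k + 1), (Nat.choose (d - k) n : ℝ) * (log (1 / p ^ c)) ^ n := by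
  have ha : 0 ≤ 1 - c * log p := by nlinarith [log_nonpos hp.le hp1]
  have hlog : log (1 / p ^ c) + 1 = 1 - c * log p := by
    rw [one_div, log_inv, log_rpow hp]; ring
  have hexp : exp 1 * exp (-(1 - c * log p)) = p ^ c := by
    rw [← exp_add, rpow_def_of_pos hp]; ring_nf
  rw [integral_Ioi_pow_mul_exp_neg d ha, sum_prod_div_mul_sum_choose_mul_pow, hlog, ← hexp]
  ring

/-- For `d ∈ ℕ`, `c > 0`, `p ∈ (0,1]`:
`e·Γ(1+d, 1−c ln p) = p^c Σ_{k=0}^d [(∏_{j=0}^k (d−j+1))/(d+1)] Σ_{n=0}^{d−k} C(d−k,n) (ln(1/p^c))^n`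
(with `Γ(1+d,x) = ∫_x^∞ t^d e^{-t} dt`); consequently the Hanel–Thurner entropy
`S_{c,d}` admits the stated expansion over any probability distribution with
positive entries, provided `1−c+cd ≠ 0`. -/
theorem hanel_thurner_expansion (d : ℕ) (c : ℝ) (hc : 0 < c) :
    (∀ p : ℝ, 0 < p → p ≤ 1 →
      Real.exp 1 * ∫ t in Set.Ioi (1 - c * Real.log p), (t : ℝ) ^ d * Real.exp (-t) =
        p ^ c *
          ∑ k ∈ Finset.range (d + 1),
            ((∏ j ∈ Finset.range (k + 1), ((d : ℝ) - (j : ℝ) + 1)) / ((d : ℝ) + 1)) *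
              ∑ n ∈ Finset.range (d - k + 1),
                (Nat.choose (d - k) n : ℝ) * (Real.log (1 / p ^ c)) ^ n) ∧
      ∀ (W : ℕ) (p : Fin W → ℝ), (∀ i, 0 < p i) → (∑ i, p i = 1) →
        1 - c + c * d ≠ 0 →
        (Real.exp 1 / (1 - c + c * d)) *
            (∑ i, ∫ t in Set.Ioi (1 - c * Real.log (p i)), (t : ℝ) ^ d * Real.exp (-t)) -
            c / (1 - c + c * d) =
          (1 / (1 - c + c * d)) *
              (∑ i, p i ^ c *
                ∑ k ∈ Finset.range (d + 1),
                  ((∏ j ∈ Finset.range (k + 1), ((d : ℝ) - (j : ℝ) + 1)) / ((d : ℝ) + 1)) *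
                    ∑ n ∈ Finset.range (d - k + 1),
                      (Nat.choose (d - k) n : ℝ) * (Real.log (1 / p i ^ c)) ^ n) -
            c / (1 - c + c * d) := by
  refine ⟨fun p hp hp1 => exp_one_mul_integral_Ioi_one_sub_mul_log d hc.le hp hp1,
    fun W p hpos hsum _ => ?_⟩
  have hle : ∀ i, p i ≤ 1 := fun i =>
    hsum ▸ single_le_sum (fun j _ => (hpos j).le) (mem_univ i)
  rw [div_mul_eq_mul_div, one_div_mul_eq_div, mul_sum]
  congr 2
  exact sum_congr rfl fun i _ =>
    exp_one_mul_integral_Ioi_one_sub_mul_log d hc.le (hpos i) (hle i)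
end

section
/- Fix δ > 0. For every integer W ≥ 1, the entropy S_δ evaluated on the uniform distribution over W states equals (ln W)^δ. Moreover, for all integers W_A, W_B ≥ 2, S_δ evaluated on the uniform distribution over W_A·W_B states equals Φ_δ(S_δ(uniform over W_A), S_δ(uniform over W_B)), where Φ_δ(x,y) = (x^{1/δ} + y^{1/δ})^{δ}; that is, S_δ is weakly composable with composition law Φ_δ. -/
/-! On the uniform distribution over `W` states every term of `S_δ` equals `(1/W) (ln W)^δ`, so
`S_δ = (ln W)^δ`. Hence `S_δ^{1/δ} = ln W` is additive under `W ↦ W_A W_B`, which is exactly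
composability with the law `Φ_δ`. -/

open Real

noncomputable def sDelta (δ : ℝ) {ι : Type*} [Fintype ι] (p : ι → ℝ) : ℝ :=
  ∑ i, p i * log (1 / p i) ^ δ

theorem sDelta_uniform (δ : ℝ) {W : ℕ} (hW : W ≠ 0) :
    sDelta δ (fun _ : Fin W => (1 : ℝ) / W) = log W ^ δ := by
  have hW' : (W : ℝ) ≠ 0 := by exact_mod_cast hW
  simp only [sDelta, Finset.sum_const, Finset.card_univ, Fintype.card_fin, one_div_one_div,
    nsmul_eq_mul]
  field_simp

theorem rpow_add_eq_rpow_rpow_one_div_add {x y δ : ℝ} (hx : 0 ≤ x) (hy : 0 ≤ y) (hδ : δ ≠ 0) :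
    (x + y) ^ δ = ((x ^ δ) ^ (1 / δ) + (y ^ δ) ^ (1 / δ)) ^ δ := by
  rw [one_div, rpow_rpow_inv hx hδ, rpow_rpow_inv hy hδ]

theorem sDelta_uniform_mul {δ : ℝ} (hδ : δ ≠ 0) {WA WB : ℕ} (hA : WA ≠ 0) (hB : WB ≠ 0) :
    sDelta δ (fun _ : Fin (WA * WB) => (1 : ℝ) / (WA * WB)) =
      (sDelta δ (fun _ : Fin WA => (1 : ℝ) / WA) ^ (1 / δ) +
        sDelta δ (fun _ : Fin WB => (1 : ℝ) / WB) ^ (1 / δ)) ^ δ := by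
  have hA' : (WA : ℝ) ≠ 0 := by exact_mod_cast hA
  have hB' : (WB : ℝ) ≠ 0 := by exact_mod_cast hB
  have h := sDelta_uniform δ (Nat.mul_ne_zero hA hB)
  push_cast at h
  rw [h, sDelta_uniform δ hA, sDelta_uniform δ hB, log_mul hA' hB']
  exact rpow_add_eq_rpow_rpow_one_div_add (log_natCast_nonneg WA) (log_natCast_nonneg WB) hδ

/-- For `δ > 0`: the entropy `S_δ(p) = Σ_i p_i (ln(1/p_i))^δ` on the uniform
distribution over `W` states equals `(ln W)^δ`, and `S_δ` is weakly composable: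
for `W_A, W_B ≥ 2`, its value on the uniform distribution over `W_A·W_B` states is
`Φ_δ` of its values on the uniform distributions over `W_A` and `W_B` states, where
`Φ_δ(x,y) = (x^{1/δ} + y^{1/δ})^δ`. -/
theorem s_delta_uniform_weakly_composable (δ : ℝ) (hδ : 0 < δ)
    (Φ : ℝ → ℝ → ℝ)
    (hΦ : ∀ x y : ℝ, Φ x y = (x ^ (1 / δ) + y ^ (1 / δ)) ^ δ) :
    (∀ W : ℕ, 1 ≤ W →
      ∑ _i : Fin W, ((1 : ℝ) / W) * (Real.log (1 / ((1 : ℝ) / W))) ^ δ =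
        (Real.log W) ^ δ) ∧
      ∀ WA WB : ℕ, 2 ≤ WA → 2 ≤ WB →
        ∑ _i : Fin (WA * WB),
            ((1 : ℝ) / (WA * WB)) * (Real.log (1 / ((1 : ℝ) / (WA * WB)))) ^ δ =
          Φ (∑ _i : Fin WA, ((1 : ℝ) / WA) * (Real.log (1 / ((1 : ℝ) / WA))) ^ δ)
            (∑ _i : Fin WB, ((1 : ℝ) / WB) * (Real.log (1 / ((1 : ℝ) / WB))) ^ δ) := by
  refine ⟨fun W hW => sDelta_uniform δ (by omega), fun WA WB hA hB => ?_⟩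
  rw [hΦ]
  exact sDelta_uniform_mul hδ.ne' (by omega) (by omega)
end

section
/- Let q be a real number with 2/3 < q < 1. Then the function f : (0,1] → ℝ defined by f(x) = (x/(1−q)) ( x^{2(1−q)} − 2 x^{(1−q)} + x^{−(1−q)} ) is concave on (0,1]. Consequently the entropy S_{III}(p) = (1/(1−q)) Σ_{i=1}^W p_i ( p_i^{2(1−q)} − 2 p_i^{(1−q)} + p_i^{−(1−q)} ), being a sum of concave functions of the individual probabilities, is concave on the space of probability distributions with entries in (0,1]. -/
/-!
With `c = 1 - q ∈ (0, 1/3)` and `x > 0`, the summand `x (x^{2c} - 2x^c + x^{-c})` equals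
`x^{2c+1} - 2x^{c+1} + x^{1-c}`, whose second derivative is
`c ((4c+2) x^{2c-1} - (2c+2) x^{c-1} - (1-c) x^{-c-1})`. For `0 < x ≤ 1` these three powers
increase, so the bracket is at most `(3c - 1) x^{-c-1} ≤ 0`. Concavity of `S_{III}` follows
because a sum of concave functions of the separate coordinates is concave on a product of
convex sets.
-/

open Real Set

theorem ConcaveOn.sum_comp_apply {𝕜 E β ι : Type*} [Semiring 𝕜] [PartialOrder 𝕜]
    [AddCommMonoid E] [AddCommMonoid β] [PartialOrder β] [IsOrderedAddMonoid β]
    [Module 𝕜 E] [Module 𝕜 β] [Fintype ι] {s : Set E} {f : E → β} (hf : ConcaveOn 𝕜 s f) :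
    ConcaveOn 𝕜 {p : ι → E | ∀ i, p i ∈ s} (fun p => ∑ i, f (p i)) := by
  refine ⟨fun x hx y hy a b ha hb hab i => hf.1 (hx i) (hy i) ha hb hab,
    fun x hx y hy a b ha hb hab => ?_⟩
  rw [Finset.smul_sum, Finset.smul_sum, ← Finset.sum_add_distrib]
  exact Finset.sum_le_sum fun i _ => hf.2 (hx i) (hy i) ha hb hab

theorem Real.hasDerivAt_rpow_add_one {x : ℝ} (hx : x ≠ 0) (p : ℝ) :
    HasDerivAt (fun x => x ^ (p + 1)) ((p + 1) * x ^ p) x := by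
  simpa using hasDerivAt_rpow_const (p := p + 1) (Or.inl hx)

-- With `c = 1 - q`, `S_{III}(p) = (1 / c) * ∑ i, sIIISummand c (p i)`.
noncomputable def sIIISummand (c x : ℝ) : ℝ :=
  x * (x ^ (2 * c) - 2 * x ^ c + x ^ (-c))

theorem sIIISummand_eq_of_pos (c : ℝ) {x : ℝ} (hx : 0 < x) :
    sIIISummand c x = x ^ (2 * c + 1) - 2 * x ^ (c + 1) + x ^ (-c + 1) := by
  simp only [sIIISummand, rpow_add_one hx.ne']
  ring

theorem sIIISummand_second_deriv_nonpos {c x : ℝ} (hc : 0 ≤ c) (hc3 : 3 * c ≤ 1)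
    (hx0 : 0 < x) (hx1 : x ≤ 1) :
    (2 * c + 1) * (2 * c * x ^ (2 * c - 1)) - 2 * ((c + 1) * (c * x ^ (c - 1)))
      + (-c + 1) * (-c * x ^ (-c - 1)) ≤ 0 := by
  have hA : x ^ (2 * c - 1) ≤ x ^ (c - 1) :=
    rpow_le_rpow_of_exponent_ge hx0 hx1 (by linarith)
  have hB : x ^ (c - 1) ≤ x ^ (-c - 1) :=
    rpow_le_rpow_of_exponent_ge hx0 hx1 (by linarith)
  have hC : 0 ≤ x ^ (-c - 1) := (rpow_pos_of_pos hx0 _).le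
  have bracket : (4 * c + 2) * x ^ (2 * c - 1) - (2 * c + 2) * x ^ (c - 1)
      - (1 - c) * x ^ (-c - 1) ≤ 0 := by
    nlinarith [mul_le_mul_of_nonneg_left hA (by linarith : (0 : ℝ) ≤ 4 * c + 2),
      mul_le_mul_of_nonneg_left hB (by linarith : (0 : ℝ) ≤ 2 * c),
      mul_nonneg (by linarith : (0 : ℝ) ≤ 1 - 3 * c) hC]
  nlinarith [mul_nonpos_of_nonneg_of_nonpos hc bracket]

theorem concaveOn_sIIISummand {c : ℝ} (hc : 0 ≤ c) (hc3 : 3 * c ≤ 1) :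
    ConcaveOn ℝ (Ioc 0 1) (sIIISummand c) := by
  set P : ℝ → ℝ := fun x => x ^ (2 * c + 1) - 2 * x ^ (c + 1) + x ^ (-c + 1)
  set P' : ℝ → ℝ := fun x =>
    (2 * c + 1) * x ^ (2 * c) - 2 * ((c + 1) * x ^ c) + (-c + 1) * x ^ (-c)
  set P'' : ℝ → ℝ := fun x =>
    (2 * c + 1) * (2 * c * x ^ (2 * c - 1)) - 2 * ((c + 1) * (c * x ^ (c - 1)))
      + (-c + 1) * (-c * x ^ (-c - 1))
  have hP : ∀ x ≠ 0, HasDerivAt P (P' x) x :=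
    fun x hx => ((hasDerivAt_rpow_add_one hx _).sub
      ((hasDerivAt_rpow_add_one hx _).const_mul 2)).add (hasDerivAt_rpow_add_one hx _)
  have hP' : ∀ x ≠ 0, HasDerivAt P' (P'' x) x :=
    fun x hx => (((hasDerivAt_rpow_const (Or.inl hx)).const_mul _).sub
      (((hasDerivAt_rpow_const (Or.inl hx)).const_mul _).const_mul 2)).add
      ((hasDerivAt_rpow_const (Or.inl hx)).const_mul _)
  have hconcave : ConcaveOn ℝ (Ioc 0 1) P := by
    refine concaveOn_of_hasDerivWithinAt2_nonpos (f' := P') (f'' := P'') (convex_Ioc 0 1)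
      (fun x hx => (hP x hx.1.ne').continuousAt.continuousWithinAt) ?_ ?_ ?_ <;>
      rw [interior_Ioc] <;> intro x hx
    · exact (hP x hx.1.ne').hasDerivWithinAt
    · exact (hP' x hx.1.ne').hasDerivWithinAt
    · exact sIIISummand_second_deriv_nonpos hc hc3 hx.1 hx.2.le
  exact hconcave.congr fun x hx => (sIIISummand_eq_of_pos c hx.1).symm

/-- For `2/3 < q < 1`, the function
`f(x) = (x/(1−q))(x^{2(1−q)} − 2x^{1−q} + x^{−(1−q)})` is concave on `(0,1]`;
consequently the entropy
`S_{III}(p) = (1/(1−q)) Σ_i p_i (p_i^{2(1−q)} − 2 p_i^{1−q} + p_i^{−(1−q)})`,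
being a sum of concave functions of the individual probabilities, is concave on the
space of probability vectors with entries in `(0,1]`. -/
theorem s_III_concave (q : ℝ) (hq1 : 2 / 3 < q) (hq2 : q < 1) :
    ConcaveOn ℝ (Set.Ioc (0 : ℝ) 1)
      (fun x : ℝ => (x / (1 - q)) *
        (x ^ (2 * (1 - q)) - 2 * x ^ (1 - q) + x ^ (-(1 - q)))) ∧
      ∀ W : ℕ,
        ConcaveOn ℝ {p : Fin W → ℝ | ∀ i, p i ∈ Set.Ioc (0 : ℝ) 1}
          (fun p : Fin W → ℝ => (1 / (1 - q)) *
            ∑ i, p i *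
              (p i ^ (2 * (1 - q)) - 2 * p i ^ (1 - q) + p i ^ (-(1 - q)))) := by
  have hsummand := concaveOn_sIIISummand (c := 1 - q) (by linarith) (by linarith)
  have hscale : (0 : ℝ) ≤ 1 / (1 - q) := by
    have : 0 < 1 - q := by linarith
    positivity
  refine ⟨(hsummand.smul hscale).congr fun x _ => ?_,
    fun W => hsummand.sum_comp_apply.smul hscale⟩
  simp only [sIIISummand, smul_eq_mul]
  ring
end
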